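/- arXiv:1512.09007 — 10 statements merged into one kernel-verified Lean document; each statement's English description precedes it below -/
import Mathlib

section
/- Every group homomorphism g from the Baer–Specker group ℤ^ℕ to ℤ factors through a finite subproduct: there exist n ∈ ℕ and a group homomorphism g' : ℤ^n → ℤ such that g = g' ∘ π_n, where π_n : ℤ^ℕ → ℤ^n is the projection onto the first n coordinates. -/
/-!
Suppose no `N` works, i.e. for every `k` there is `x k` vanishing below `k` with `g (x k) ≠ 0`;
up to sign, `0 < g (x k)`. Choose moduli `d 0 ∣ d 1 ∣ ⋯` with
`2 * ∑ k < m, d k * g (x k) < d m` and put `y = ∑ k, d k • x k`, a coordinatewise finite sum.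
For every `m`, `g y ≡ S m := ∑ k < m, d k * g (x k) [ZMOD d m]`, and `S m ≥ m`. Taking
`m > |g y|` makes `S m - g y` a multiple of `d m` strictly between `0` and `d m`.
-/

open Finset

namespace Specker

/-- The sum `∑ k, c k • x k`, written coordinatewise. It is the honest infinite sum when every
`x k` vanishes below `k`, since then coordinate `i` only receives the terms with `k ≤ i`. -/
def weightedSum (c : ℕ → ℤ) (x : ℕ → ℕ → ℤ) : ℕ → ℤ :=
  fun i => ∑ k ∈ range (i + 1), c k * x k i

theorem weightedSum_add_smul (c₁ c₂ : ℕ → ℤ) (D : ℤ) (x : ℕ → ℕ → ℤ) :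
    weightedSum (c₁ + D • c₂) x = weightedSum c₁ x + D • weightedSum c₂ x := by
  funext i
  simp only [weightedSum, Pi.add_apply, Pi.smul_apply, smul_eq_mul, add_mul, sum_add_distrib,
    mul_sum, mul_assoc]

theorem weightedSum_of_eq_zero_of_le {c : ℕ → ℤ} {x : ℕ → ℕ → ℤ} {m : ℕ}
    (hx : ∀ k i, i < k → x k i = 0) (hc : ∀ k, m ≤ k → c k = 0) :
    weightedSum c x = ∑ k ∈ range m, c k • x k := by
  funext i
  simp only [weightedSum, Finset.sum_apply, Pi.smul_apply, smul_eq_mul]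
  have hsub : ∀ n, min (i + 1) m ≤ n → range (min (i + 1) m) ⊆ range n :=
    fun n h => range_subset_range.mpr h
  rw [← sum_subset (hsub _ (min_le_left _ _)), ← sum_subset (hsub _ (min_le_right _ _))]
  · intro k hk hk'
    simp only [mem_range, lt_min_iff, not_and_or, not_lt] at hk hk'
    rw [hx k i (by omega), mul_zero]
  · intro k hk hk'
    simp only [mem_range, lt_min_iff, not_and_or, not_lt] at hk hk'
    rw [hc k (by omega), zero_mul]

theorem map_weightedSum_modEq (g : (ℕ → ℤ) →+ ℤ) {c : ℕ → ℤ} {x : ℕ → ℕ → ℤ} {m : ℕ} {D : ℤ}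
    (hx : ∀ k i, i < k → x k i = 0) (hc : ∀ k, m ≤ k → D ∣ c k) :
    g (weightedSum c x) ≡ ∑ k ∈ range m, c k * g (x k) [ZMOD D] := by
  set head : ℕ → ℤ := fun k => if k < m then c k else 0
  set tail : ℕ → ℤ := fun k => if k < m then 0 else c k / D
  have hsplit : c = head + D • tail := by
    funext k
    by_cases hk : k < m
    · simp [head, tail, hk]
    · simp [head, tail, hk, Int.mul_ediv_cancel' (hc k (not_lt.mp hk))]
  have hhead : weightedSum head x = ∑ k ∈ range m, c k • x k := by
    rw [weightedSum_of_eq_zero_of_le hx fun k hk => if_neg (not_lt.mpr hk)]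
    exact sum_congr rfl fun k hk => by rw [if_pos (mem_range.mp hk)]
  conv_lhs => rw [hsplit]
  rw [weightedSum_add_smul, map_add, map_zsmul, smul_eq_mul, hhead, map_sum]
  simp only [map_zsmul, smul_eq_mul]
  exact Int.modEq_add_fac_self

/-- The pair `(d m, ∑ k < m, d k * a k)`; the factor `2 * s + 1` makes `d (m + 1)` a multiple
of `d m` exceeding twice the new partial sum `s`. -/
def moduliAndPartialSums (a : ℕ → ℤ) : ℕ → ℤ × ℤ
  | 0 => (1, 0)
  | m + 1 =>
    let p := moduliAndPartialSums a m
    let s := p.2 + p.1 * a m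
    (p.1 * (2 * s + 1), s)

theorem exists_moduli (a : ℕ → ℤ) (ha : ∀ k, 0 ≤ a k) :
    ∃ d : ℕ → ℤ, (∀ k, 0 < d k) ∧ (∀ m k, m ≤ k → d m ∣ d k) ∧
      ∀ m, 2 * ∑ k ∈ range m, d k * a k < d m := by
  set d : ℕ → ℤ := fun m => (moduliAndPartialSums a m).1
  set s : ℕ → ℤ := fun m => (moduliAndPartialSums a m).2
  have hs : ∀ m, s m = ∑ k ∈ range m, d k * a k := by
    intro m
    induction m with
    | zero => rfl
    | succ m ih => rw [sum_range_succ, ← ih]; rfl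
  have hpos : ∀ m, 0 < d m ∧ 0 ≤ s m := by
    intro m
    induction m with
    | zero => exact ⟨one_pos, le_rfl⟩
    | succ m ih =>
      have hs' : 0 ≤ s m + d m * a m := add_nonneg ih.2 (mul_nonneg ih.1.le (ha m))
      exact ⟨mul_pos ih.1 (by change 0 < 2 * (s m + d m * a m) + 1; omega), hs'⟩
  refine ⟨d, fun k => (hpos k).1, fun m k hmk => ?_, fun m => ?_⟩
  · induction k, hmk using Nat.le_induction with
    | base => exact dvd_rfl
    | succ k _ ih => exact ih.trans (dvd_mul_right _ _)
  · rw [← hs]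
    cases m with
    | zero => show (2 : ℤ) * 0 < 1; norm_num
    | succ m =>
      change 2 * s (m + 1) < d m * (2 * s (m + 1) + 1)
      nlinarith [(hpos m).1, (hpos (m + 1)).2]

theorem exists_map_nonpos (g : (ℕ → ℤ) →+ ℤ) (x : ℕ → ℕ → ℤ)
    (hx : ∀ k i, i < k → x k i = 0) : ∃ k, g (x k) ≤ 0 := by
  by_contra! hgx
  obtain ⟨d, hd_pos, hd_dvd, hd_large⟩ := exists_moduli (fun k => g (x k)) fun k => (hgx k).le
  set t := g (weightedSum d x)
  set m := t.natAbs + 1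
  set S := ∑ k ∈ range m, d k * g (x k)
  have hmS : (m : ℤ) ≤ S :=
    calc (m : ℤ) = ∑ _k ∈ range m, (1 : ℤ) := by simp
      _ ≤ S := sum_le_sum fun k _ => one_le_mul_of_one_le_of_one_le (hd_pos k) (hgx k)
  have hdvd : d m ∣ S - t := (map_weightedSum_modEq g hx fun k hk => hd_dvd m k hk).dvd
  have hle : d m ≤ S - t := Int.le_of_dvd (by omega) hdvd
  have hlarge := hd_large m
  omega

theorem exists_forall_lt_eq_zero_imp_map_eq_zero (g : (ℕ → ℤ) →+ ℤ) :
    ∃ N, ∀ x : ℕ → ℤ, (∀ i < N, x i = 0) → g x = 0 := by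
  by_contra! h
  choose x hx hgx using h
  obtain ⟨k, hk⟩ := exists_map_nonpos g (fun k => (g (x k)).sign • x k)
    fun k i hi => by simp [hx k i hi]
  rw [map_zsmul, smul_eq_mul, Int.sign_mul_self_eq_abs] at hk
  exact hgx k (abs_nonpos_iff.mp hk)

end Specker

theorem exists_fin_factorization_of_map_eq_zero {M A : Type*} [AddCommGroup M]
    [AddCommGroup A] (g : (ℕ → M) →+ A) {N : ℕ}
    (hg : ∀ x : ℕ → M, (∀ i < N, x i = 0) → g x = 0) :
    ∃ g' : (Fin N → M) →+ A, ∀ x : ℕ → M, g x = g' (fun i : Fin N => x i) := by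
  refine ⟨g.comp (Function.ExtendByZero.hom M Fin.val), fun x => ?_⟩
  rw [AddMonoidHom.comp_apply, ← sub_eq_zero, ← map_sub]
  refine hg _ fun i hi => ?_
  rw [Pi.sub_apply, Function.ExtendByZero.hom_apply,
    Fin.val_injective.extend_apply (fun j : Fin N => x j) 0 ⟨i, hi⟩, sub_self]

/-- Every group homomorphism `g` from the Baer–Specker group `ℤ^ℕ` to `ℤ` factors through
a finite subproduct: there exist `n : ℕ` and a group homomorphism `g' : ℤ^n →+ ℤ` such that
`g = g' ∘ π_n`, where `π_n` is the projection onto the first `n` coordinates. -/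
theorem specker_factors_through_finite_projection (g : (ℕ → ℤ) →+ ℤ) :
    ∃ (n : ℕ) (g' : (Fin n → ℤ) →+ ℤ), ∀ x : ℕ → ℤ, g x = g' (fun i : Fin n => x i) := by
  obtain ⟨N, hN⟩ := Specker.exists_forall_lt_eq_zero_imp_map_eq_zero g
  exact ⟨N, exists_fin_factorization_of_map_eq_zero g hN⟩
end

section
/- Every group homomorphism g : ℤ^ℕ → ℤ is continuous, where ℤ^ℕ carries the Tychonoff product topology of the discrete topology on ℤ, and ℤ carries the discrete topology. -/
/-!
Write `e m` for the `m`-th unit vector. If `d` divides all coordinates of `x` outside a finite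
set `S`, then `d ∣ g x - ∑ m ∈ S, x m * g (e m)`. For `x = (2 ^ s n)ₙ` with fast-growing
exponents `s`, these congruences modulo `2 ^ s K` force `g x` to equal the partial sum
`∑ n < K, 2 ^ s n * g (e n)` for every large `K`, so `g (e m) = 0` for all `m ≥ N`, say.
Then `g x - ∑ m < N, x m * g (e m)` is divisible by every power of `2` when `2 ^ m ∣ x m` for
all `m`, and likewise for `3`; as every sequence is a sum of two such sequences, `g` is a finite
combination of coordinate projections.
-/

open Finset

lemma dvd_map_sub_sum_single {ι : Type*} [DecidableEq ι] (g : (ι → ℤ) →+ ℤ) (x : ι → ℤ)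
    (S : Finset ι) (d : ℤ) (hd : ∀ i ∉ S, d ∣ x i) :
    d ∣ g x - ∑ i ∈ S, x i * g (Pi.single i 1) := by
  have hsplit : x - ∑ i ∈ S, x i • Pi.single i 1 = d • fun i => if i ∈ S then 0 else x i / d := by
    ext i
    by_cases hi : i ∈ S
    · simp [hi, Pi.single_apply]
    · simp [hi, Pi.single_apply, Int.mul_ediv_cancel' (hd i hi)]
  refine ⟨g fun i => if i ∈ S then 0 else x i / d, ?_⟩
  simpa only [map_sub, map_sum, map_zsmul, smul_eq_mul] using congrArg g hsplit

lemma exists_pow_dvd_add_pow_dvd {R : Type*} [CommSemiring R] {p q : R} (h : IsCoprime p q)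
    (x : ℕ → R) : ∃ u v : ℕ → R, x = u + v ∧ (∀ m, p ^ m ∣ u m) ∧ ∀ m, q ^ m ∣ v m := by
  choose A B hAB using fun m => h.pow (m := m) (n := m)
  refine ⟨fun m => A m * p ^ m * x m, fun m => B m * q ^ m * x m, ?_,
    fun m => ⟨A m * x m, by ring⟩, fun m => ⟨B m * x m, by ring⟩⟩
  ext m
  simp [← add_mul, hAB]

lemma map_eq_sum_of_pow_dvd (g : (ℕ → ℤ) →+ ℤ) {N : ℕ}
    (hN : ∀ m, N ≤ m → g (Pi.single m 1) = 0) {p : ℤ} (hp : p.natAbs ≠ 1) {y : ℕ → ℤ}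
    (hy : ∀ m, p ^ m ∣ y m) : g y = ∑ m ∈ range N, y m * g (Pi.single m 1) := by
  have hdvd : ∀ K, p ^ (N + K) ∣ g y - ∑ m ∈ range N, y m * g (Pi.single m 1) := by
    intro K
    have htail : ∑ m ∈ range (N + K), y m * g (Pi.single m 1) =
        ∑ m ∈ range N, y m * g (Pi.single m 1) := by
      simp [sum_range_add, hN]
    rw [← htail]
    refine dvd_map_sub_sum_single g y _ _ fun m hm => (pow_dvd_pow p ?_).trans (hy m)
    simpa using hm
  rw [← sub_eq_zero]
  by_contra hne
  obtain ⟨n, hn⟩ := Int.finiteMultiplicity_iff.2 ⟨hp, hne⟩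
  exact hn ((pow_dvd_pow p (by omega)).trans (hdvd (n + 1)))

lemma map_eq_sum_of_map_single_eq_zero (g : (ℕ → ℤ) →+ ℤ) {N : ℕ}
    (hN : ∀ m, N ≤ m → g (Pi.single m 1) = 0) (x : ℕ → ℤ) :
    g x = ∑ m ∈ range N, x m * g (Pi.single m 1) := by
  obtain ⟨u, v, rfl, hu, hv⟩ :=
    exists_pow_dvd_add_pow_dvd (Int.isCoprime_iff_gcd_eq_one.2 rfl : IsCoprime (2 : ℤ) 3) x
  rw [map_add, map_eq_sum_of_pow_dvd g hN (by decide) hu,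
    map_eq_sum_of_pow_dvd g hN (by decide) hv, ← sum_add_distrib]
  simp [add_mul]

/-- `K ↦ (s K, ∑ n < K, 2 ^ s n * a n)` for exponents `s` that exceed the absolute value of the
partial sum by at least `K`. -/
def speckerExponents (a : ℕ → ℤ) : ℕ → ℕ × ℤ
  | 0 => (0, 0)
  | K + 1 =>
    let P := (speckerExponents a K).2 + 2 ^ (speckerExponents a K).1 * a K
    ((speckerExponents a K).1 + P.natAbs + K + 1, P)

lemma exists_monotone_exponents (a : ℕ → ℤ) : ∃ s : ℕ → ℕ, Monotone s ∧
    ∀ K, (∑ n ∈ range K, 2 ^ s n * a n).natAbs + K ≤ s K := by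
  set s : ℕ → ℕ := fun K => (speckerExponents a K).1
  have hsum : ∀ K, (speckerExponents a K).2 = ∑ n ∈ range K, 2 ^ s n * a n := by
    intro K
    induction K with
    | zero => rfl
    | succ K ih => rw [sum_range_succ, ← ih]; rfl
  refine ⟨s, monotone_nat_of_le_succ fun K => ?_, fun K => ?_⟩
  · simp only [s, speckerExponents]
    omega
  · rw [← hsum]
    cases K with
    | zero => simp [s, speckerExponents]
    | succ K => simp only [s, speckerExponents]; omega

lemma exists_map_single_eq_zero (g : (ℕ → ℤ) →+ ℤ) :
    ∃ N, ∀ m, N ≤ m → g (Pi.single m 1) = 0 := by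
  obtain ⟨s, hs_mono, hs⟩ := exists_monotone_exponents fun n => g (Pi.single n 1)
  set x : ℕ → ℤ := fun n => 2 ^ s n
  have hx : ∀ K, (g x).natAbs ≤ K → g x = ∑ n ∈ range K, 2 ^ s n * g (Pi.single n 1) := by
    intro K hK
    have hdvd : (2 : ℤ) ^ s K ∣ g x - ∑ n ∈ range K, 2 ^ s n * g (Pi.single n 1) :=
      dvd_map_sub_sum_single g x (range K) _ fun q hq =>
        pow_dvd_pow 2 (hs_mono (by simpa using hq))
    refine sub_eq_zero.1 (Int.eq_zero_of_dvd_of_natAbs_lt_natAbs hdvd ?_)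
    calc _ ≤ (g x).natAbs + (∑ n ∈ range K, 2 ^ s n * g (Pi.single n 1)).natAbs :=
          Int.natAbs_sub_le _ _
      _ ≤ s K := by linarith [hs K]
      _ < ((2 : ℤ) ^ s K).natAbs := by simpa [Int.natAbs_pow] using Nat.lt_two_pow_self
  refine ⟨(g x).natAbs, fun K hK => ?_⟩
  have hstep := (hx K hK).symm.trans (hx (K + 1) (by omega))
  rw [sum_range_succ, left_eq_add] at hstep
  exact (mul_eq_zero.1 hstep).resolve_left (pow_ne_zero _ two_ne_zero)

/-- Every group homomorphism `g : ℤ^ℕ → ℤ` is continuous, where `ℤ^ℕ` carries the Tychonoff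
product topology of the discrete topology on `ℤ`, and `ℤ` is discrete (note that the standard
topology on `ℤ` in Mathlib is the discrete one, and `ℕ → ℤ` carries the product topology). -/
theorem specker_hom_continuous (g : (ℕ → ℤ) →+ ℤ) : Continuous g := by
  obtain ⟨N, hN⟩ := exists_map_single_eq_zero g
  rw [show ⇑g = fun x => ∑ m ∈ range N, x m * g (Pi.single m 1) from
    funext (map_eq_sum_of_map_single_eq_zero g hN)]
  fun_prop
end

section
/- The coordinate projections g_n : ℤ^ℕ → ℤ, defined by g_n(x) = x(n), form a basis of the group Hom(ℤ^ℕ, ℤ): every group homomorphism from ℤ^ℕ to ℤ can be written uniquely as a finite ℤ-linear combination of the maps g_n. In particular, Hom(ℤ^ℕ, ℤ) is a free abelian group on countably many generators. -/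
/-!
A homomorphism `φ : ℤ^ℕ → ℤ` is determined by its values on the unit vectors `eₙ`: if these
vanish, then `φ` kills every `x` whose `n`-th coordinate is divisible by `pⁿ` (modulo finitely
many coordinates `φ x` is then divisible by every power of `p`), and every `x` is the sum of
such a vector for `p = 2` and one for `p = 3`.

Moreover `φ eₙ = 0` for almost all `n`. Otherwise, with weights `w` such that `w (n + 1)`
is a multiple of `w n` exceeding `|w n * φ eₙ|`, the map `S ↦ φ (S.indicator w)` would be
injective on the subsets `S` of the infinite set `{n | φ eₙ ≠ 0}`: at the least element `j`
where `S` and `T` differ, `φ` of the difference is `± w j * φ eⱼ ≠ 0` modulo `w (j + 1)`.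
This contradicts Cantor's theorem.

These two facts say that the projections and the evaluations at the `eₙ` are dual bases.
-/

namespace Specker

open Function

section

variable {ι : Type*} (φ : (ι → ℤ) →+ ℤ)

theorem dvd_map_of_forall_dvd {m : ℤ} {x : ι → ℤ} (hx : ∀ i, m ∣ x i) : m ∣ φ x := by
  choose y hy using hx
  have hxy : x = m • y := funext hy
  exact ⟨φ y, by rw [hxy, map_zsmul, smul_eq_mul]⟩

variable [DecidableEq ι]

theorem map_single (i : ι) (c : ℤ) : φ (Pi.single i c) = c * φ (Pi.single i 1) := by
  rw [← smul_eq_mul, ← map_zsmul, ← Pi.single_smul', smul_eq_mul, mul_one]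

theorem map_eq_map_update_add (x : ι → ℤ) (i : ι) :
    φ x = φ (update x i 0) + x i * φ (Pi.single i 1) := by
  rw [← map_single, ← map_add]
  congr 1
  funext k
  by_cases hk : k = i
  · subst hk; simp
  · simp [hk]

theorem map_ne_zero_of_forall_ne_dvd {m : ℤ} {x : ι → ℤ} (i : ι) (hx : ∀ k ≠ i, m ∣ x k)
    (hi : x i * φ (Pi.single i 1) ≠ 0) (him : |x i * φ (Pi.single i 1)| < m) : φ x ≠ 0 := by
  intro hφx
  have hrest : m ∣ φ (update x i 0) := dvd_map_of_forall_dvd φ fun k => by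
    by_cases hk : k = i
    · subst hk; simp
    · rw [update_of_ne hk]; exact hx k hk
  have hsum := map_eq_map_update_add φ x i
  rw [hφx, eq_comm, add_eq_zero_iff_eq_neg'] at hsum
  exact hi (Int.eq_zero_of_abs_lt_dvd (hsum ▸ hrest.neg_right) him)

end

section

variable {φ : (ℕ → ℤ) →+ ℤ} (hφ : ∀ n, φ (Pi.single n 1) = 0)
include hφ

theorem dvd_map_of_forall_ge_dvd {m : ℤ} (N : ℕ) {x : ℕ → ℤ} (hx : ∀ n, N ≤ n → m ∣ x n) :
    m ∣ φ x := by
  induction N generalizing x with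
  | zero => exact dvd_map_of_forall_dvd φ fun n => hx n n.zero_le
  | succ N ih =>
    rw [map_eq_map_update_add φ x N, hφ, mul_zero, add_zero]
    refine ih fun n hn => ?_
    rcases hn.eq_or_lt with rfl | hlt
    · simp
    · rw [update_of_ne hlt.ne']
      exact hx n hlt

theorem map_eq_zero_of_pow_dvd {p : ℤ} (hp : p.natAbs ≠ 1) {x : ℕ → ℤ}
    (hx : ∀ n, p ^ n ∣ x n) : φ x = 0 := by
  by_contra hx0
  obtain ⟨N, hN⟩ := Int.finiteMultiplicity_iff.2 ⟨hp, hx0⟩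
  exact hN (dvd_map_of_forall_ge_dvd hφ (N + 1) fun n hn => (pow_dvd_pow p hn).trans (hx n))

theorem eq_zero_of_map_single_eq_zero : φ = 0 := by
  refine AddMonoidHom.ext fun x => ?_
  have hcop (n : ℕ) : IsCoprime ((2 : ℤ) ^ n) (3 ^ n) := .pow (by norm_num)
  choose u v huv using hcop
  have hx : x = (fun n => x n * u n * 2 ^ n) + (fun n => x n * v n * 3 ^ n) := by
    funext n
    simp only [Pi.add_apply]
    linear_combination -x n * huv n
  rw [AddMonoidHom.zero_apply, hx, map_add,
    map_eq_zero_of_pow_dvd hφ (p := 2) (by norm_num) fun n => dvd_mul_left _ _,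
    map_eq_zero_of_pow_dvd hφ (p := 3) (by norm_num) fun n => dvd_mul_left _ _, add_zero]

end

theorem hom_ext_single {φ ψ : (ℕ → ℤ) →+ ℤ} (h : ∀ n, φ (Pi.single n 1) = ψ (Pi.single n 1)) :
    φ = ψ :=
  sub_eq_zero.1 <| eq_zero_of_map_single_eq_zero fun n => by simp [h n]

section

variable (φ : (ℕ → ℤ) →+ ℤ)

def weight (n : ℕ) : ℤ :=
  ∏ i ∈ Finset.range n, (|φ (Pi.single i 1)| + 1)

theorem weight_pos (n : ℕ) : 0 < weight φ n :=
  Finset.prod_pos fun _ _ => by positivity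

theorem weight_succ (n : ℕ) : weight φ (n + 1) = weight φ n * (|φ (Pi.single n 1)| + 1) :=
  Finset.prod_range_succ _ _

theorem weight_dvd_weight {m n : ℕ} (h : m ≤ n) : weight φ m ∣ weight φ n :=
  Finset.prod_dvd_prod_of_subset _ _ _ (Finset.range_subset_range.2 h)

theorem injOn_map_indicator_weight :
    Set.InjOn (fun S : Set ℕ => φ (S.indicator (weight φ))) (𝒫 {n | φ (Pi.single n 1) ≠ 0}) := by
  intro S hS T hT hST
  by_contra hne
  set j := sInf (symmDiff S T)
  have hj : j ∈ symmDiff S T := Nat.sInf_mem (Set.symmDiff_nonempty.2 hne)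
  have hagree : ∀ n < j, (n ∈ S ↔ n ∈ T) := fun n hn => by
    have := Nat.notMem_of_lt_sInf hn
    rw [Set.mem_symmDiff] at this
    tauto
  set z := S.indicator (weight φ) - T.indicator (weight φ)
  have hzj : |z j| = weight φ j := by
    rcases Set.mem_symmDiff.1 hj with ⟨hjS, hjT⟩ | ⟨hjT, hjS⟩ <;>
      simp [z, hjS, hjT, abs_of_pos (weight_pos φ j)]
  have hdj : φ (Pi.single j 1) ≠ 0 := by
    rcases Set.mem_symmDiff.1 hj with ⟨h, -⟩ | ⟨h, -⟩
    exacts [hS h, hT h]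
  refine map_ne_zero_of_forall_ne_dvd φ (m := weight φ (j + 1)) (x := z) j (fun n hn => ?_)
    ?_ ?_ ?_
  · rcases hn.lt_or_gt with hlt | hgt
    · have hzn : z n = 0 := by
        by_cases hnS : n ∈ S
        · simp [z, hnS, (hagree n hlt).1 hnS]
        · simp [z, hnS, mt (hagree n hlt).2 hnS]
      exact hzn ▸ dvd_zero _
    · have hdvd (U : Set ℕ) : weight φ (j + 1) ∣ U.indicator (weight φ) n := by
        by_cases hnU : n ∈ U
        · rw [Set.indicator_of_mem hnU]
          exact weight_dvd_weight φ hgt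
        · rw [Set.indicator_of_notMem hnU]
          exact dvd_zero _
      exact dvd_sub (hdvd S) (hdvd T)
  · exact mul_ne_zero (abs_pos.1 (hzj ▸ weight_pos φ j)) hdj
  · rw [abs_mul, hzj, weight_succ]
    exact mul_lt_mul_of_pos_left (lt_add_one _) (weight_pos φ j)
  · simpa [z, map_sub, sub_eq_zero] using hST

theorem finite_setOf_map_single_ne_zero : {n | φ (Pi.single n 1) ≠ 0}.Finite := by
  by_contra hA
  let code : ℤ → {n | φ (Pi.single n 1) ≠ 0} :=
    Set.Infinite.natEmbedding _ hA ∘ Encodable.encode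
  have hcode : Injective code := (Embedding.injective _).comp Encodable.encode_injective
  refine cantor_injective (fun S => code (φ ((Subtype.val '' S).indicator (weight φ))))
    fun S T hST => Subtype.val_injective.image_injective ?_
  exact injOn_map_indicator_weight φ (Subtype.coe_image_subset _ S)
    (Subtype.coe_image_subset _ T) (hcode hST)

end

theorem dualBases_evalAddMonoidHom_single :
    Module.DualBases (fun n => Pi.evalAddMonoidHom (fun _ : ℕ => ℤ) n)
      (fun n => (AddMonoidHom.eval (Pi.single n (1 : ℤ))).toIntLinearMap) where
  eval_same n := by simp
  eval_of_ne m n hmn := by simp [hmn.symm]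
  total h := hom_ext_single h
  finite := finite_setOf_map_single_ne_zero

end Specker

/-- The coordinate projections `g_n : ℤ^ℕ → ℤ`, `g_n x = x n`, form a basis of the
group `Hom(ℤ^ℕ, ℤ)` (as a `ℤ`-module, i.e. as an abelian group): every homomorphism
`ℤ^ℕ →+ ℤ` is uniquely a finite `ℤ`-linear combination of the `g_n`.  In particular,
`Hom(ℤ^ℕ, ℤ)` is free abelian on countably many generators. -/
theorem specker_dual_free_on_projections :
    ∃ b : Module.Basis ℕ ℤ ((ℕ → ℤ) →+ ℤ),
      ∀ n : ℕ, b n = Pi.evalAddMonoidHom (fun _ : ℕ => ℤ) n :=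
  ⟨Specker.dualBases_evalAddMonoidHom_single.basis, fun n =>
    congrFun Specker.dualBases_evalAddMonoidHom_single.coe_basis n⟩
end

section
/- The group G is not discrete; that is, the singleton {0} is not an open subset of G. -/
/-!
A basic neighbourhood of `0` in `G` is the set of homomorphisms vanishing on a finite set
`s ⊆ ℤ^ℕ`. Finitely many vectors impose only `#s` linear conditions on the coefficients of
`∑_{j ≤ #s} cⱼ πⱼ`, where the `πⱼ` are coordinate projections, so some nonzero such combination
vanishes on `s` and lies in every neighbourhood of `0`.
-/

/-- The topology of pointwise convergence on `G = Hom(ℤ^ℕ, ℤ)`, i.e. the topology induced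
from the product `ℤ^(ℤ^ℕ)` with `ℤ` discrete. -/
noncomputable instance : TopologicalSpace ((ℕ → ℤ) →+ ℤ) :=
  TopologicalSpace.induced (fun g : (ℕ → ℤ) →+ ℤ => (g : (ℕ → ℤ) → ℤ)) Pi.topologicalSpace

open Module

theorem Module.Dual.exists_ne_zero_forall_mem_eq_zero {R ι : Type*} [CommRing R] [Nontrivial R]
    [Infinite ι] (s : Finset (ι → R)) : ∃ f : Dual R (ι → R), f ≠ 0 ∧ ∀ x ∈ s, f x = 0 := by
  classical
  let e : Fin (s.card + 1) ↪ ι := Fin.valEmbedding.trans (Infinite.natEmbedding ι)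
  let Φ : (Fin (s.card + 1) → R) →ₗ[R] Dual R (ι → R) :=
    Fintype.linearCombination R fun j => LinearMap.proj (e j)
  have hΦ : ∀ c j, Φ c (Pi.single (e j) 1) = c j := fun c j => by
    simp [Φ, Fintype.linearCombination_apply, Pi.single_apply, e.injective.eq_iff]
  let evalOnS : (Fin (s.card + 1) → R) →ₗ[R] (s → R) :=
    LinearMap.pi fun x : s => LinearMap.applyₗ x.1 ∘ₗ Φ
  -- `#s` linear equations in `#s + 1` unknowns have a nontrivial solution
  have hnot : ¬ Function.Injective evalOnS :=
    fun hinj => by simpa using card_le_of_injective R evalOnS hinj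
  obtain ⟨c, hc, hc0⟩ : ∃ c, evalOnS c = 0 ∧ c ≠ 0 := by
    simpa [injective_iff_map_eq_zero, and_comm] using hnot
  obtain ⟨j, hj⟩ := Function.ne_iff.mp hc0
  refine ⟨Φ c, fun h => hj ?_, fun x hx => congr_fun hc ⟨x, hx⟩⟩
  simpa [hΦ] using LinearMap.congr_fun h (Pi.single (e j) 1)

theorem exists_finset_forall_eq_zero_mem_of_isOpen {U : Set ((ℕ → ℤ) →+ ℤ)} (hU : IsOpen U)
    (h0 : 0 ∈ U) : ∃ s : Finset (ℕ → ℤ), ∀ g : (ℕ → ℤ) →+ ℤ, (∀ x ∈ s, g x = 0) → g ∈ U := by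
  obtain ⟨V, hV, rfl⟩ := isOpen_induced_iff.mp hU
  obtain ⟨s, u, hu, hsub⟩ := isOpen_pi_iff.mp hV _ h0
  refine ⟨s, fun g hg => hsub fun x hx => ?_⟩
  simpa [hg x hx] using (hu x hx).2

/-- `G = Hom(ℤ^ℕ, ℤ)` with the topology of pointwise convergence is not discrete:
the singleton `{0}` is not open. -/
theorem G_not_discrete : ¬ IsOpen ({0} : Set ((ℕ → ℤ) →+ ℤ)) := by
  intro h
  obtain ⟨s, hs⟩ := exists_finset_forall_eq_zero_mem_of_isOpen h rfl
  obtain ⟨f, hf, hfs⟩ := Module.Dual.exists_ne_zero_forall_mem_eq_zero s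
  exact hf <| LinearMap.toAddMonoidHom_injective (hs f.toAddMonoidHom hfs)
end

section
/- Every finite subset Y of ℤ^ℕ is contained in a finitely generated subgroup H of ℤ^ℕ such that ℤ^ℕ decomposes as an internal direct sum ℤ^ℕ = H ⊕ N for some subgroup N of ℤ^ℕ. -/
/-!
Over a principal ideal domain `R`, every nonzero `z : ι → R` factors as `z = g • u` with
`ψ u = 1` for some linear functional `ψ`: `g` generates the ideal spanned by the coordinates of
`z`, and writing `g` as a combination of finitely many coordinates gives `ψ`. Then add the
elements of `Y` one at a time to a finitely generated summand `H` of `R^ι = H ⊕ N`: write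
`y = h + n` with `h ∈ H`, `n ∈ N`; if `n = g • u ≠ 0`, then `u ∈ N` and
`N = R u ⊕ (N ∩ ker ψ)`, so `H ⊕ R u` is again a finitely generated summand, and it
contains `y`.
-/

theorem IsCompl.sup_inf_of_le {α : Type*} [Lattice α] [BoundedOrder α] [IsModularLattice α]
    {a b c d : α} (hab : IsCompl a b) (hcd : IsCompl c d) (hcb : c ≤ b) :
    IsCompl (a ⊔ c) (b ⊓ d) := by
  refine Disjoint.isCompl_sup_left_of_isCompl_sup_right (hcd.disjoint.mono_right inf_le_right) ?_
  rwa [inf_comm, ← sup_inf_assoc_of_le d hcb, hcd.sup_eq_top, top_inf_eq]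

namespace Submodule

variable {R M : Type*} [Ring R] [AddCommGroup M] [Module R M]

theorem isCompl_span_singleton_ker {u : M} {ψ : M →ₗ[R] R} (hψ : ψ u = 1) :
    IsCompl (R ∙ u) (LinearMap.ker ψ) := by
  refine ⟨disjoint_def.mpr ?_, codisjoint_iff.mpr (eq_top_iff.mpr fun x _ => mem_sup.mpr ?_)⟩
  · rintro _ hx hψx
    obtain ⟨a, rfl⟩ := mem_span_singleton.mp hx
    simp_all
  · exact ⟨ψ x • u, smul_mem _ _ (mem_span_singleton_self u), x - ψ x • u,
      by simp [hψ], add_sub_cancel _ _⟩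

theorem mem_of_smul_mem_of_isCompl {H N : Submodule R M} (h : IsCompl H N) {g : R}
    (hg : IsSMulRegular M g) {u : M} (hu : g • u ∈ N) : u ∈ N := by
  obtain ⟨a, ha, b, hb, rfl⟩ := mem_sup.mp (h.sup_eq_top ▸ mem_top : u ∈ H ⊔ N)
  have hga : g • a ∈ H ⊓ N := ⟨smul_mem _ g ha, by
    simpa [smul_add] using N.sub_mem hu (N.smul_mem g hb : g • b ∈ N)⟩
  rw [h.inf_eq_bot, mem_bot, ← smul_zero g] at hga
  rw [hg hga, zero_add]
  exact hb

theorem _root_.IsCompl.sup_span_singleton_inf_ker {H N : Submodule R M} (h : IsCompl H N) {u : M}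
    (hu : u ∈ N) {ψ : M →ₗ[R] R} (hψ : ψ u = 1) :
    IsCompl (H ⊔ R ∙ u) (N ⊓ LinearMap.ker ψ) :=
  h.sup_inf_of_le (isCompl_span_singleton_ker hψ) ((span_singleton_le_iff_mem u N).mpr hu)

end Submodule

variable {ι R : Type*} [CommRing R] [IsDomain R] [IsPrincipalIdealRing R]

theorem Pi.exists_eq_smul_and_apply_eq_one {z : ι → R} (hz : z ≠ 0) :
    ∃ g ≠ (0 : R), ∃ (u : ι → R) (ψ : (ι → R) →ₗ[R] R),
      z = g • u ∧ ψ u = 1 := by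
  set g := Submodule.IsPrincipal.generator (Ideal.span (Set.range z))
  have hspan : Ideal.span (Set.range z) = Ideal.span {g} :=
    (Submodule.IsPrincipal.span_singleton_generator _).symm
  have hdvd : ∀ i, g ∣ z i := fun i => Ideal.mem_span_singleton.mp
    (hspan ▸ Ideal.subset_span ⟨i, rfl⟩)
  choose u hu using hdvd
  have hzu : z = g • u := funext hu
  have hg : g ≠ 0 := by rintro hg; exact hz (by simp [hzu, hg])
  obtain ⟨c, hc⟩ := Finsupp.mem_span_range_iff_exists_finsupp.mp
    (hspan ▸ Ideal.mem_span_singleton_self g : g ∈ Ideal.span (Set.range z))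
  set ψ : (ι → R) →ₗ[R] R := ∑ i ∈ c.support, c i • LinearMap.proj i
  have hψz : ψ z = g := by simp [ψ, ← hc, Finsupp.sum]
  refine ⟨g, hg, u, ψ, hzu, mul_left_cancel₀ hg ?_⟩
  rw [mul_one, ← smul_eq_mul, ← map_smul, ← hzu, hψz]

open Submodule in
theorem Pi.exists_fg_isCompl_superset (Y : Finset (ι → R)) :
    ∃ H N : Submodule R (ι → R), H.FG ∧ (Y : Set (ι → R)) ⊆ H ∧ IsCompl H N := by
  classical
  induction Y using Finset.induction_on with
  | empty => exact ⟨⊥, ⊤, fg_bot, by simp, isCompl_bot_top⟩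
  | insert y Y _ ih =>
    obtain ⟨H, N, hH, hYH, hHN⟩ := ih
    obtain ⟨h, hh, n, hn, rfl⟩ := mem_sup.mp (hHN.sup_eq_top ▸ mem_top : y ∈ H ⊔ N)
    simp only [Finset.coe_insert, Set.insert_subset_iff]
    by_cases hn0 : n = 0
    · exact ⟨H, N, hH, ⟨by simpa [hn0], hYH⟩, hHN⟩
    obtain ⟨g, hg, u, ψ, rfl, hψ⟩ := Pi.exists_eq_smul_and_apply_eq_one hn0
    have hu : u ∈ N := mem_of_smul_mem_of_isCompl hHN (IsSMulRegular.of_ne_zero hg) hn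
    have hy : h + g • u ∈ H ⊔ R ∙ u :=
      add_mem (mem_sup_left hh) (smul_mem _ g (mem_sup_right (mem_span_singleton_self u)))
    exact ⟨H ⊔ R ∙ u, N ⊓ LinearMap.ker ψ, hH.sup (fg_span_singleton u),
      ⟨hy, hYH.trans (SetLike.coe_subset_coe.mpr le_sup_left)⟩,
      hHN.sup_span_singleton_inf_ker hu hψ⟩

/-- Every finite subset `Y` of `ℤ^ℕ` is contained in a finitely generated subgroup `H`
of `ℤ^ℕ` which is a direct summand: `ℤ^ℕ = H ⊕ N` (internally) for some subgroup `N`. -/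
theorem finset_in_fg_direct_summand (Y : Finset (ℕ → ℤ)) :
    ∃ H N : AddSubgroup (ℕ → ℤ),
      AddSubgroup.FG H ∧ (Y : Set (ℕ → ℤ)) ⊆ (H : Set (ℕ → ℤ)) ∧ IsCompl H N := by
  obtain ⟨H, N, hH, hYH, hHN⟩ := Pi.exists_fg_isCompl_superset Y
  refine ⟨H.toAddSubgroup, N.toAddSubgroup, (Submodule.fg_iff_addSubgroup_fg H).mp hH, hYH, ?_⟩
  rwa [AddSubgroup.toIntSubmodule.isCompl_iff, Submodule.toAddSubgroup_toIntSubmodule,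
    Submodule.toAddSubgroup_toIntSubmodule]
end

section
/- The evaluation map e : ℤ^ℕ × G → ℤ defined by e(x, g) = g(x) is separately continuous: for each fixed x ∈ ℤ^ℕ the map g ↦ g(x) is continuous on G, and for each fixed g ∈ G the map x ↦ g(x) is continuous on ℤ^ℕ (where ℤ^ℕ carries the product topology of the discrete topology on ℤ, and ℤ is discrete). -/
/-!
Continuity of `g ↦ g x` is continuity of a coordinate projection. A homomorphism `g : ℤ^ℕ → ℤ`
is continuous once it vanishes on a tail subgroup `{x | ∀ i < n, x i = 0}`, which is open, and
by Specker's lemma it does: if not, pick `x n` in the `n`-th tail with `g (x n) ≠ 0`. For moduli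
`m (n + 1) = m n * 2 * (|g (x n)| + 1)` the series `y = ∑ n, m n • x n` converges coordinatewise
and `g y ≡ ∑_{n<N} m n * g (x n) (mod m N)`. The partial sums have absolute value below `m N / 2`, so `g y`
would equal all of them for large `N`, although consecutive ones differ.
-/

open Finset Filter Topology

section TailSubgroup

variable (M : Type*) [AddGroup M]

def tailSubgroup (n : ℕ) : AddSubgroup (ℕ → M) where
  carrier := {x | ∀ i < n, x i = 0}
  add_mem' hx hy i hi := by simp [hx i hi, hy i hi]
  zero_mem' _ _ := rfl
  neg_mem' hx i hi := by simp [hx i hi]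

variable [TopologicalSpace M] [DiscreteTopology M]

theorem tailSubgroup_mem_nhds_zero (n : ℕ) : (tailSubgroup M n : Set (ℕ → M)) ∈ 𝓝 0 := by
  have : (Set.Iio n).pi (fun _ => ({0} : Set M)) ∈ 𝓝 0 :=
    set_pi_mem_nhds (Set.finite_Iio n) fun _ _ => by simp
  simpa [Set.pi, tailSubgroup] using this

variable {M}

theorem AddMonoidHom.continuous_of_tailSubgroup_le_ker {N : Type*} [AddZeroClass N]
    [TopologicalSpace N] [DiscreteTopology N] (g : (ℕ → M) →+ N) {n : ℕ}
    (hn : tailSubgroup M n ≤ g.ker) : Continuous g := by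
  refine continuous_of_tendsto_nhds_zero g ?_
  rw [nhds_discrete N, tendsto_pure]
  exact mem_of_superset (tailSubgroup_mem_nhds_zero M n) hn

end TailSubgroup

theorem dvd_map_of_forall_dvd {ι : Type*} (g : (ι → ℤ) →+ ℤ) {m : ℤ} {z : ι → ℤ}
    (h : ∀ i, m ∣ z i) : m ∣ g z := by
  choose w hw using h
  rw [show z = m • w from funext hw, map_zsmul]
  exact dvd_mul_right m _

/-- The series `∑ n, x n`, which converges coordinatewise when `x n ∈ tailSubgroup ℤ n`. -/
def tailSum (x : ℕ → ℕ → ℤ) : ℕ → ℤ := fun i => ∑ n ∈ range (i + 1), x n i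

theorem tailSum_apply_eq_sum_range {x : ℕ → ℕ → ℤ} (hx : ∀ n, x n ∈ tailSubgroup ℤ n)
    {i N : ℕ} (hN : i < N) : tailSum x i = ∑ n ∈ range N, x n i := by
  refine sum_subset (range_subset_range.2 hN) fun n hnN hni => ?_
  exact hx n i (by simp at hni; omega)

theorem dvd_map_tailSum_sub_sum (g : (ℕ → ℤ) →+ ℤ) {x : ℕ → ℕ → ℤ}
    (hx : ∀ n, x n ∈ tailSubgroup ℤ n) {m : ℤ} {N : ℕ} (hm : ∀ n ≥ N, ∀ i, m ∣ x n i) :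
    m ∣ g (tailSum x) - ∑ n ∈ range N, g (x n) := by
  rw [← map_sum, ← map_sub]
  refine dvd_map_of_forall_dvd g fun i => ?_
  have hiM : i < max (i + 1) N := by omega
  have hNM : N ≤ max (i + 1) N := le_max_right _ _
  rw [Pi.sub_apply, Finset.sum_apply, tailSum_apply_eq_sum_range hx hiM,
    ← sum_range_add_sum_Ico _ hNM, add_sub_cancel_left]
  exact dvd_sum fun n hn => hm n (mem_Ico.1 hn).1 i

section SpeckerModulus

variable (a : ℕ → ℤ)

def speckerModulus (N : ℕ) : ℤ := ∏ k ∈ range N, 2 * (|a k| + 1)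

theorem speckerModulus_succ (N : ℕ) :
    speckerModulus a (N + 1) = speckerModulus a N * (2 * (|a N| + 1)) :=
  prod_range_succ _ _

theorem speckerModulus_pos (N : ℕ) : 0 < speckerModulus a N :=
  prod_pos fun _ _ => by positivity

theorem speckerModulus_dvd {N n : ℕ} (h : N ≤ n) : speckerModulus a N ∣ speckerModulus a n :=
  prod_dvd_prod_of_subset _ _ _ (range_subset_range.2 h)

theorem two_pow_le_speckerModulus (N : ℕ) : 2 ^ N ≤ speckerModulus a N :=
  calc (2 : ℤ) ^ N = ∏ _k ∈ range N, 2 := by rw [prod_const, card_range]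
    _ ≤ speckerModulus a N :=
      prod_le_prod (fun _ _ => zero_le_two) fun k _ => by linarith [abs_nonneg (a k)]

theorem two_mul_abs_sum_lt_speckerModulus (N : ℕ) :
    2 * |∑ n ∈ range N, speckerModulus a n * a n| < speckerModulus a N := by
  induction N with
  | zero => simp [speckerModulus]
  | succ N ih =>
    have hm := speckerModulus_pos a N
    calc 2 * |∑ n ∈ range (N + 1), speckerModulus a n * a n|
        ≤ 2 * |∑ n ∈ range N, speckerModulus a n * a n| + 2 * (speckerModulus a N * |a N|) := by
          have hterm : |speckerModulus a N * a N| = speckerModulus a N * |a N| := by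
            rw [abs_mul, abs_of_pos hm]
          rw [sum_range_succ, ← hterm]
          linarith [abs_add_le (∑ n ∈ range N, speckerModulus a n * a n) (speckerModulus a N * a N)]
      _ < speckerModulus a (N + 1) := by
          rw [speckerModulus_succ]
          linarith

/-- The partial sums of `∑ n, speckerModulus a n * a n` converge in the profinite completion of
`ℤ`, but not to an integer. -/
theorem not_forall_speckerModulus_dvd_sub_sum (ha : ∀ n, a n ≠ 0) (t : ℤ) :
    ¬ ∀ N, speckerModulus a N ∣ t - ∑ n ∈ range N, speckerModulus a n * a n := by
  intro hdvd
  obtain ⟨N, hN⟩ := pow_unbounded_of_one_lt (2 * |t|) one_lt_two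
  have eq_sum : ∀ n ≥ N, t = ∑ k ∈ range n, speckerModulus a k * a k := fun n hn => by
    have hlt : 2 * |t| < speckerModulus a n :=
      hN.trans_le ((pow_le_pow_right₀ one_le_two hn).trans (two_pow_le_speckerModulus a n))
    refine sub_eq_zero.1 (Int.eq_zero_of_abs_lt_dvd (hdvd n) ?_)
    linarith [abs_sub t (∑ k ∈ range n, speckerModulus a k * a k),
      two_mul_abs_sum_lt_speckerModulus a n]
  have : speckerModulus a N * a N = 0 := by
    have := (eq_sum (N + 1) N.le_succ).symm.trans (eq_sum N le_rfl)
    rwa [sum_range_succ, add_eq_left] at this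
  exact mul_ne_zero (speckerModulus_pos a N).ne' (ha N) this

end SpeckerModulus

namespace AddMonoidHom

theorem exists_map_eq_zero_of_mem_tailSubgroup (g : (ℕ → ℤ) →+ ℤ) {x : ℕ → ℕ → ℤ}
    (hx : ∀ n, x n ∈ tailSubgroup ℤ n) : ∃ n, g (x n) = 0 := by
  by_contra! ha
  set m := speckerModulus fun n => g (x n)
  refine not_forall_speckerModulus_dvd_sub_sum _ ha (g (tailSum fun n => m n • x n)) fun N => ?_
  have := dvd_map_tailSum_sub_sum g (fun n => (tailSubgroup ℤ n).zsmul_mem (hx n) (m n))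
    fun n (hn : N ≤ n) i => (speckerModulus_dvd _ hn).mul_right (x n i)
  simpa only [map_zsmul, smul_eq_mul] using this

theorem exists_tailSubgroup_le_ker (g : (ℕ → ℤ) →+ ℤ) : ∃ n, tailSubgroup ℤ n ≤ g.ker := by
  by_contra! h
  choose x hx hgx using fun n => SetLike.not_le_iff_exists.1 (h n)
  obtain ⟨n, hn⟩ := g.exists_map_eq_zero_of_mem_tailSubgroup hx
  exact hgx n hn

end AddMonoidHom

/-- The evaluation map `e : ℤ^ℕ × G → ℤ`, `e (x, g) = g x`, is separately continuous:
for fixed `x` the map `g ↦ g x` is continuous on `G`, and for fixed `g` the map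
`x ↦ g x` is continuous on `ℤ^ℕ`. -/
theorem evaluation_separately_continuous :
    (∀ x : ℕ → ℤ, Continuous fun g : (ℕ → ℤ) →+ ℤ => g x) ∧
    (∀ g : (ℕ → ℤ) →+ ℤ, Continuous fun x : ℕ → ℤ => g x) := by
  refine ⟨fun x => (continuous_apply x).comp continuous_induced_dom, fun g => ?_⟩
  obtain ⟨n, hn⟩ := g.exists_tailSubgroup_le_ker
  exact g.continuous_of_tailSubgroup_le_ker hn
end

section
/- For every nonempty compact subset K of G there exists m ∈ ℕ such that g(x) = 0 for every g ∈ K and every x ∈ ℤ^ℕ satisfying x(i) = 0 for all i ≤ m. -/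
/-!
Suppose that for every `m` some `g_m ∈ K` is nonzero on some `x_m` vanishing on the coordinates
`≤ m`. Since evaluation at a point is continuous with discrete values, `|g(x_j)| ≤ B_j` on `K`.
Because `x_j` vanishes below `j`, the sum `y = ∑ c_j x_j` is coordinatewise finite for any
weights, and we take `c_k = ∏_{j<k} (B_j + 2)`: a divisibility chain growing so fast that
`∑_{j<k} c_j B_j + k < c_k`. Then `g_k(y) = s + c_k g_k(x_k) + c_{k+1} t` with `|s| < c_k - k`,
so `|g_k(y)| ≥ k` whether or not `t = 0`, contradicting the boundedness of `g(y)` on `K`.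
-/

open Finset

lemma IsCompact.exists_abs_apply_le {K : Set ((ℕ → ℤ) →+ ℤ)} (hK : IsCompact K)
    (x : ℕ → ℤ) : ∃ N : ℕ, ∀ g ∈ K, |g x| ≤ N := by
  have hcont : Continuous fun g : (ℕ → ℤ) →+ ℤ => |g x| :=
    continuous_abs.comp ((continuous_apply x).comp continuous_induced_dom)
  obtain ⟨N, hN⟩ := hK.bddAbove_image hcont.continuousOn
  exact ⟨N.toNat, fun g hg => (hN ⟨g, hg, rfl⟩).trans N.self_le_toNat⟩

/-- The coordinatewise sum `∑ j, c j • x j`; it is the true sum when `x j i = 0` for `i ≤ j`. -/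
def weightedSum (c : ℕ → ℤ) (x : ℕ → ℕ → ℤ) : ℕ → ℤ :=
  fun i => ∑ j ∈ range i, c j * x j i

lemma weightedSum_eq_sum_add_smul {c : ℕ → ℤ} {x : ℕ → ℕ → ℤ}
    (hx : ∀ j, ∀ i ≤ j, x j i = 0) {n : ℕ} (hc : ∀ j ≥ n, c n ∣ c j) :
    ∃ z, weightedSum c x = ∑ j ∈ range n, c j • x j + c n • z := by
  refine ⟨fun i => ∑ j ∈ Ico n (max i n), c j / c n * x j i, funext fun i => ?_⟩
  have hextend : ∑ j ∈ range i, c j * x j i = ∑ j ∈ range (max i n), c j * x j i :=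
    sum_subset (range_subset_range.2 (le_max_left i n)) fun j _ hj => by
      rw [hx j i (not_lt.1 (mem_range.not.1 hj)), mul_zero]
  have htail : ∑ j ∈ Ico n (max i n), c j * x j i
      = c n * ∑ j ∈ Ico n (max i n), c j / c n * x j i := by
    rw [mul_sum]
    refine sum_congr rfl fun j hj => ?_
    rw [← mul_assoc, Int.mul_ediv_cancel' (hc j (mem_Ico.1 hj).1)]
  simp only [weightedSum, Pi.add_apply, Pi.smul_apply, Finset.sum_apply, smul_eq_mul]
  rw [hextend, ← sum_range_add_sum_Ico _ (le_max_right i n), htail]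

lemma exists_apply_weightedSum_eq (g : (ℕ → ℤ) →+ ℤ) {c : ℕ → ℤ} {x : ℕ → ℕ → ℤ}
    (hx : ∀ j, ∀ i ≤ j, x j i = 0) {n : ℕ} (hc : ∀ j ≥ n, c n ∣ c j) :
    ∃ t, g (weightedSum c x) = ∑ j ∈ range n, c j * g (x j) + c n * t := by
  obtain ⟨z, hz⟩ := weightedSum_eq_sum_add_smul hx hc
  refine ⟨g z, ?_⟩
  simp only [hz, map_add, map_sum, map_zsmul, smul_eq_mul]

def growthWeight (B : ℕ → ℕ) (k : ℕ) : ℕ :=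
  ∏ j ∈ range k, (B j + 2)

lemma growthWeight_dvd (B : ℕ → ℕ) {n j : ℕ} (h : n ≤ j) :
    growthWeight B n ∣ growthWeight B j :=
  prod_dvd_prod_of_subset _ _ _ (range_subset_range.2 h)

lemma sum_growthWeight_mul_add_lt (B : ℕ → ℕ) (k : ℕ) :
    ∑ j ∈ range k, growthWeight B j * B j + k < growthWeight B k := by
  induction k with
  | zero => simp [growthWeight]
  | succ k ih =>
    have hpos : 0 < growthWeight B k := prod_pos fun j _ => by omega
    have hsucc : growthWeight B (k + 1) = growthWeight B k * (B k + 2) := prod_range_succ _ _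
    rw [sum_range_succ, hsucc]
    nlinarith

lemma lt_abs_add_mul_add_mul {s b t c d A B M : ℤ} (hs : |s| ≤ A) (hb : b ≠ 0)
    (hbB : |b| ≤ B) (hc : A + M < |c|) (hd : A + |c| * B + M < |d|) :
    M < |s + c * b + d * t| := by
  have hcb : |c| ≤ |c * b| := by
    rw [abs_mul]; exact le_mul_of_one_le_right (abs_nonneg c) (Int.one_le_abs hb)
  rcases eq_or_ne t 0 with rfl | ht
  · have := abs_sub (s + c * b) s
    rw [add_sub_cancel_left] at this
    rw [mul_zero, add_zero]
    linarith
  · have hdt : |d| ≤ |d * t| := by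
      rw [abs_mul]; exact le_mul_of_one_le_right (abs_nonneg d) (Int.one_le_abs ht)
    have hcbB : |c * b| ≤ |c| * B := by
      rw [abs_mul]; exact mul_le_mul_of_nonneg_left hbB (abs_nonneg c)
    have h1 := abs_sub (s + c * b + d * t) (s + c * b)
    rw [add_sub_cancel_left] at h1
    have h2 := abs_add_le s (c * b)
    linarith

theorem compact_subset_kills_tail_general (K : Set ((ℕ → ℤ) →+ ℤ)) (hK : IsCompact K) :
    ∃ m : ℕ, ∀ g ∈ K, ∀ x : ℕ → ℤ, (∀ i ≤ m, x i = 0) → g x = 0 := by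
  by_contra! hcon
  choose g hgK x hx hgx using hcon
  choose B hB using fun j => hK.exists_abs_apply_le (x j)
  obtain ⟨M, hM⟩ := hK.exists_abs_apply_le (weightedSum (fun j => growthWeight B j) x)
  obtain ⟨t, ht⟩ := exists_apply_weightedSum_eq (g (M + 1))
    (c := fun j => growthWeight B j) hx (n := M + 2)
    fun j hj => Int.natCast_dvd_natCast.2 (growthWeight_dvd B hj)
  rw [sum_range_succ] at ht
  have hs : |∑ j ∈ range (M + 1), (growthWeight B j : ℤ) * g (M + 1) (x j)|
      ≤ ∑ j ∈ range (M + 1), (growthWeight B j : ℤ) * B j := by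
    refine (abs_sum_le_sum_abs _ _).trans (sum_le_sum fun j _ => ?_)
    rw [abs_mul, Nat.abs_cast]
    exact mul_le_mul_of_nonneg_left (hB j _ (hgK _)) (Nat.cast_nonneg _)
  have hgrowth := sum_growthWeight_mul_add_lt B (M + 1)
  have hgrowth_succ := sum_growthWeight_mul_add_lt B (M + 2)
  rw [sum_range_succ] at hgrowth_succ
  zify at hgrowth hgrowth_succ
  have hlarge : M < |g (M + 1) (weightedSum (fun j => growthWeight B j) x)| := by
    rw [ht]
    exact lt_abs_add_mul_add_mul hs (hgx _) (hB _ _ (hgK _))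
      (by rw [Nat.abs_cast]; omega) (by simp only [Nat.abs_cast]; omega)
  exact (hM _ (hgK _)).not_gt hlarge

/-- For every nonempty compact subset `K` of `G = Hom(ℤ^ℕ, ℤ)` there exists `m : ℕ` such
that `g x = 0` for all `g ∈ K` and all `x : ℕ → ℤ` vanishing on the first coordinates
`i ≤ m`. -/
theorem compact_subset_kills_tail (K : Set ((ℕ → ℤ) →+ ℤ)) (hK : IsCompact K)
    (hne : K.Nonempty) :
    ∃ m : ℕ, ∀ g ∈ K, ∀ x : ℕ → ℤ, (∀ i ≤ m, x i = 0) → g x = 0 :=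
  compact_subset_kills_tail_general K hK
end

section
/- For every nonempty compact subset K of G there exists m ∈ ℕ such that g(δ_n) = 0 for every g ∈ K and every n > m, where δ_n ∈ ℤ^ℕ is the sequence with δ_n(n) = 1 and δ_n(i) = 0 for i ≠ n. -/
theorem Int.le_abs_of_dvd_sub {a s D b : ℤ} (hdvd : D ∣ a - s) (hs : b ≤ |s|)
    (hD : |s| + b < |D|) : b ≤ |a| := by
  by_contra! ha
  have hsub : a - s = 0 :=
    Int.eq_zero_of_abs_lt_dvd ((abs_dvd D _).2 hdvd) (by linarith [abs_sub a s])
  rw [sub_eq_zero.1 hsub] at ha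
  linarith

theorem AddMonoidHom.dvd_apply_of_forall_dvd {ι : Type*} (g : (ι → ℤ) →+ ℤ) {D : ℤ}
    {y : ι → ℤ} (h : ∀ i, D ∣ y i) : D ∣ g y := by
  choose z hz using h
  have hy : y = D • z := funext hz
  rw [hy, map_zsmul, smul_eq_mul]
  exact dvd_mul_right D (g z)

theorem exists_forall_dvd_sub_of_eventually_const {y : ℕ → ℕ → ℤ} {D : ℕ → ℤ}
    (hD : ∀ k, D k ∣ D (k + 1)) (hy : ∀ k i, D k ∣ y (k + 1) i - y k i)
    (hconst : ∀ k i, i ≤ k → y (k + 1) i = y k i) :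
    ∃ x : ℕ → ℤ, ∀ k i, D k ∣ x i - y k i := by
  have hD' : ∀ k j, k ≤ j → D k ∣ D j := fun k =>
    Nat.le_induction dvd_rfl fun j _ ih => ih.trans (hD j)
  have hcauchy : ∀ k j, k ≤ j → ∀ i, D k ∣ y j i - y k i := fun k =>
    Nat.le_induction (fun i => by simp) fun j hkj ih i => by
      simpa using dvd_add ((hD' k j hkj).trans (hy j i)) (ih i)
  have hstable : ∀ i j, i ≤ j → y j i = y i i := fun i =>
    Nat.le_induction rfl fun j hij ih => (hconst j i hij).trans ih
  refine ⟨fun i => y i i, fun k i => ?_⟩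
  rcases le_total k i with hki | hik
  · exact hcauchy k i hki i
  · simp [hstable i k hik]

namespace BaerSpecker

variable {M : Type*} [AddCommGroup M]

def step (g : M →+ ℤ) (v : M) (b : ℕ) (p : M × ℤ) : M × ℤ :=
  let y := p.1 + (p.2 * g v * (b + |g p.1|)) • v
  (y, p.2 * (|g y| + b + 1))

theorem exists_step_fst_eq_add_smul (g : M →+ ℤ) (v : M) (b : ℕ) (p : M × ℤ) :
    ∃ c, p.2 ∣ c ∧ (step g v b p).1 = p.1 + c • v :=
  ⟨_, dvd_mul_of_dvd_left (dvd_mul_right _ _) _, rfl⟩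

theorem dvd_step_snd (g : M →+ ℤ) (v : M) (b : ℕ) (p : M × ℤ) : p.2 ∣ (step g v b p).2 :=
  dvd_mul_right _ _

theorem step_snd_ne_zero (g : M →+ ℤ) (v : M) (b : ℕ) {p : M × ℤ} (hp : p.2 ≠ 0) :
    (step g v b p).2 ≠ 0 :=
  mul_ne_zero hp (by positivity)

theorem le_abs_apply_step_fst {g : M →+ ℤ} {v : M} (hv : g v ≠ 0) (b : ℕ) {p : M × ℤ}
    (hp : p.2 ≠ 0) : (b : ℤ) ≤ |g (step g v b p).1| := by
  have happly : g (step g v b p).1 = g p.1 + p.2 * g v ^ 2 * (b + |g p.1|) := by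
    simp only [step, map_add, map_zsmul, smul_eq_mul]; ring
  set c := p.2 * g v ^ 2
  set t : ℤ := b + |g p.1| with ht
  have hc : 1 ≤ |c| := Int.one_le_abs (by positivity)
  rw [happly]
  calc (b : ℤ) = t - |g p.1| := by rw [ht]; ring
    _ ≤ |c| * t - |g p.1| := by nlinarith [abs_nonneg (g p.1)]
    _ = |c * t| - |g p.1| := by rw [abs_mul c t, abs_of_nonneg (by positivity : 0 ≤ t)]
    _ ≤ |g p.1 + c * t| := by simpa [add_comm] using abs_sub_abs_le_abs_sub (c * t) (-g p.1)

theorem abs_apply_step_fst_add_lt (g : M →+ ℤ) (v : M) (b : ℕ) {p : M × ℤ} (hp : p.2 ≠ 0) :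
    |g (step g v b p).1| + b < |(step g v b p).2| := by
  simp only [step]
  set s := |g (p.1 + (p.2 * g v * (b + |g p.1|)) • v)|
  have hs : 0 ≤ s := abs_nonneg _
  rw [abs_mul, abs_of_pos (by positivity : 0 < s + b + 1)]
  nlinarith [Int.one_le_abs hp]

def seq (g : ℕ → M →+ ℤ) (v : ℕ → M) : ℕ → M × ℤ
  | 0 => (0, 1)
  | k + 1 => step (g k) (v k) k (seq g v k)

theorem seq_snd_ne_zero (g : ℕ → M →+ ℤ) (v : ℕ → M) (k : ℕ) : (seq g v k).2 ≠ 0 := by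
  induction k with
  | zero => exact one_ne_zero
  | succ k ih => exact step_snd_ne_zero _ _ _ ih

end BaerSpecker

open BaerSpecker in
theorem exists_forall_le_abs_apply (g : ℕ → (ℕ → ℤ) →+ ℤ) (n : ℕ → ℕ) (hn : ∀ k, k < n k)
    (hg : ∀ k, g k (Pi.single (n k) 1) ≠ 0) : ∃ x : ℕ → ℤ, ∀ k : ℕ, (k : ℤ) ≤ |g k x| := by
  set p := seq g fun k => Pi.single (n k) 1
  have hsucc (k : ℕ) : ∃ c, (p k).2 ∣ c ∧ (p (k + 1)).1 = (p k).1 + c • Pi.single (n k) 1 :=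
    exists_step_fst_eq_add_smul _ _ _ _
  obtain ⟨x, hx⟩ := exists_forall_dvd_sub_of_eventually_const (y := fun k => (p k).1)
    (D := fun k => (p k).2) (fun k => dvd_step_snd _ _ _ _)
    (fun k i => by
      obtain ⟨c, hc, he⟩ := hsucc k
      simpa [he] using dvd_mul_of_dvd_left hc _)
    (fun k i hik => by
      obtain ⟨c, -, he⟩ := hsucc k
      simp [he, (hik.trans_lt (hn k)).ne])
  refine ⟨x, fun k : ℕ => Int.le_abs_of_dvd_sub (s := g k (p (k + 1)).1) (D := (p (k + 1)).2) ?_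
    (le_abs_apply_step_fst (hg k) k (seq_snd_ne_zero _ _ k))
    (abs_apply_step_fst_add_lt _ _ k (seq_snd_ne_zero _ _ k))⟩
  rw [← map_sub]
  exact (g k).dvd_apply_of_forall_dvd (hx (k + 1))

theorem compact_subset_kills_deltas_general (K : Set ((ℕ → ℤ) →+ ℤ)) (hK : IsCompact K) :
    ∃ m : ℕ, ∀ g ∈ K, ∀ n > m, g (fun i : ℕ => if i = n then 1 else 0) = 0 := by
  by_contra! h
  simp only [← Pi.single_apply] at h
  choose g hgK n hn hg using h
  obtain ⟨x, hx⟩ := exists_forall_le_abs_apply g n hn hg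
  have hcont : Continuous fun f : (ℕ → ℤ) →+ ℤ => |f x| :=
    ((continuous_apply x).comp continuous_induced_dom).abs
  obtain ⟨B, hB⟩ := hK.bddAbove_image hcont.continuousOn
  obtain ⟨k, hk⟩ := exists_nat_gt B
  linarith [hB ⟨g k, hgK k, rfl⟩, hx k]

/-- For every nonempty compact subset `K` of `G = Hom(ℤ^ℕ, ℤ)` there exists `m : ℕ` such
that `g δ_n = 0` for all `g ∈ K` and all `n > m`, where `δ_n` is the sequence with
`δ_n n = 1` and `δ_n i = 0` for `i ≠ n`. -/
theorem compact_subset_kills_deltas (K : Set ((ℕ → ℤ) →+ ℤ)) (hK : IsCompact K)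
    (hne : K.Nonempty) :
    ∃ m : ℕ, ∀ g ∈ K, ∀ n > m, g (fun i : ℕ => if i = n then 1 else 0) = 0 :=
  compact_subset_kills_deltas_general K hK
end

section
/- The map ψ : G → ℤ^ℕ defined by ψ(g)(n) = g(δ_n), where δ_n ∈ ℤ^ℕ is the sequence with δ_n(n) = 1 and δ_n(i) = 0 for i ≠ n, is injective; that is, a group homomorphism g : ℤ^ℕ → ℤ that vanishes on every δ_n is the zero homomorphism. -/
/-!
A homomorphism `g : ℤ^ℕ → ℤ` killing every `δ_n` kills every finitely supported sequence, so
`d ∣ g y` as soon as `d` divides all but finitely many terms of `y`. Hence `g y` is divisible by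
every power of `2` when `2 ^ k ∣ y k` for all `k`, i.e. `g y = 0`, and likewise for `3`. Since
`2 ^ k` and `3 ^ k` are coprime, every sequence is the sum of two such sequences.
-/

theorem Int.eq_zero_of_forall_pow_dvd {p n : ℤ} (hp : p.natAbs ≠ 1) (h : ∀ N, p ^ N ∣ n) :
    n = 0 := by
  by_contra hn
  obtain ⟨N, hN⟩ := Int.finiteMultiplicity_iff.2 ⟨hp, hn⟩
  exact hN (h _)

theorem IsCoprime.exists_add_eq_of_pow_dvd {R : Type*} [CommRing R] {a b : R}
    (hab : IsCoprime a b) (x : ℕ → R) :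
    ∃ y z : ℕ → R, (∀ k, a ^ k ∣ y k) ∧ (∀ k, b ^ k ∣ z k) ∧ y + z = x := by
  choose u v huv using fun k => hab.pow (m := k) (n := k)
  refine ⟨fun k => x k * u k * a ^ k, fun k => x k * v k * b ^ k,
    fun k => dvd_mul_left _ _, fun k => dvd_mul_left _ _, funext fun k => ?_⟩
  simp only [Pi.add_apply]
  linear_combination x k * huv k

namespace BaerSpecker

theorem map_eq_zero_of_eventually_eq_zero {A : Type*} [AddCommGroup A] (g : (ℕ → ℤ) →+ A)
    (hg : ∀ n, g (Pi.single n 1) = 0) {x : ℕ → ℤ} (N : ℕ) (hx : ∀ k ≥ N, x k = 0) :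
    g x = 0 := by
  have hsum : x = ∑ k ∈ Finset.range N, x k • Pi.single k 1 := by
    funext i
    by_cases hi : i < N
    · simp [Finset.sum_apply, Pi.single_apply, hi]
    · simp [Finset.sum_apply, Pi.single_apply, hi, hx i (not_lt.1 hi)]
  rw [hsum, map_sum]
  exact Finset.sum_eq_zero fun k _ => by rw [map_zsmul, hg, smul_zero]

theorem dvd_map_of_eventually_dvd (g : (ℕ → ℤ) →+ ℤ)
    (hg : ∀ n, g (Pi.single n 1) = 0) {d : ℤ} {y : ℕ → ℤ} (N : ℕ) (hy : ∀ k ≥ N, d ∣ y k) :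
    d ∣ g y := by
  have htail : g (y - d • fun k => y k / d) = 0 :=
    map_eq_zero_of_eventually_eq_zero g hg N fun k hk => by
      simp [Int.mul_ediv_cancel' (hy k hk)]
  rw [map_sub, map_zsmul, sub_eq_zero] at htail
  exact ⟨_, htail⟩

theorem map_eq_zero_of_pow_dvd (g : (ℕ → ℤ) →+ ℤ)
    (hg : ∀ n, g (Pi.single n 1) = 0) {p : ℤ} (hp : p.natAbs ≠ 1) {y : ℕ → ℤ}
    (hy : ∀ k, p ^ k ∣ y k) : g y = 0 :=
  Int.eq_zero_of_forall_pow_dvd hp fun N =>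
    dvd_map_of_eventually_dvd g hg N fun k hk => (pow_dvd_pow p hk).trans (hy k)

theorem eq_zero_of_map_single_eq_zero (g : (ℕ → ℤ) →+ ℤ)
    (hg : ∀ n, g (Pi.single n 1) = 0) : g = 0 := by
  ext x
  have h23 : IsCoprime (2 : ℤ) 3 := Int.isCoprime_iff_gcd_eq_one.2 rfl
  obtain ⟨y, z, hy, hz, rfl⟩ := h23.exists_add_eq_of_pow_dvd x
  rw [map_add, map_eq_zero_of_pow_dvd g hg (by decide) hy,
    map_eq_zero_of_pow_dvd g hg (by decide) hz, add_zero, AddMonoidHom.zero_apply]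

end BaerSpecker

/-- The map `ψ : G → ℤ^ℕ`, `ψ g n = g δ_n` (where `δ_n` has `1` at coordinate `n` and `0`
elsewhere), is injective; that is, a homomorphism `g : ℤ^ℕ →+ ℤ` vanishing on every `δ_n`
is the zero homomorphism. -/
theorem psi_injective :
    Function.Injective
      (fun (g : (ℕ → ℤ) →+ ℤ) => (fun n : ℕ => g (fun i : ℕ => if i = n then 1 else 0))) := by
  intro g₁ g₂ h
  have hδ (n : ℕ) : Pi.single n 1 = fun i : ℕ => (if i = n then 1 else 0 : ℤ) :=
    funext fun i => Pi.single_apply n 1 i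
  rw [← sub_eq_zero]
  exact BaerSpecker.eq_zero_of_map_single_eq_zero _ fun n => by
    simpa [hδ, sub_eq_zero] using congrFun h n
end

section
/- The group G is not reflexive: the canonical evaluation map α_G : G → G^^ into the second Pontryagin dual of G is not a topological isomorphism (it is not a homeomorphism). -/
/-- The Pontryagin dual of a topological abelian group: the group of continuous
homomorphisms to the circle group `ℝ/ℤ`, with the compact-open topology. -/
abbrev PontDual (A : Type*) [AddMonoid A] [TopologicalSpace A] : Type _ :=
  ContinuousAddMonoidHom A (AddCircle (1 : ℝ))

open Filter Topology Set

theorem Int.lt_abs_add_mul {n a m : ℤ} (ha : n < |a|) (hm : |a| + n < m) (t : ℤ) :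
    n < |a + m * t| := by
  rcases eq_or_ne t 0 with rfl | ht
  · simpa using ha
  have h1 : 1 ≤ |t| := Int.one_le_abs ht
  have h2 : |m * t| ≤ |a + m * t| + |a| := by
    simpa using abs_sub (a + m * t) a
  rw [abs_mul] at h2
  nlinarith [mul_le_mul_of_nonneg_left h1 (abs_nonneg m), le_abs_self m]

section Diagonal

variable {p : ℕ → ℕ → ℤ} {M : ℕ → ℤ}

theorem eq_of_forall_succ_eq_of_lt (hfix : ∀ j i, i < j → p (j + 1) i = p j i) {i m n : ℕ}
    (him : i < m) (hmn : m ≤ n) : p n i = p m i := by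
  induction n, hmn using Nat.le_induction with
  | base => rfl
  | succ n hmn ih => rw [hfix n i (by omega), ih]

theorem dvd_sub_of_forall_dvd_succ_sub (hM : ∀ j, M j ∣ M (j + 1))
    (hp : ∀ j i, M j ∣ p (j + 1) i - p j i) {m n : ℕ} (hmn : m ≤ n) (i : ℕ) :
    M m ∣ p n i - p m i := by
  induction n, hmn using Nat.le_induction with
  | base => simp
  | succ n hmn ih =>
    have hMmn : M m ∣ M n := Nat.rel_of_forall_rel_succ_of_le (· ∣ ·) hM hmn
    simpa using dvd_add ih (hMmn.trans (hp n i))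

theorem exists_diag_eq_add_smul (hfix : ∀ j i, i < j → p (j + 1) i = p j i)
    (hM : ∀ j, M j ∣ M (j + 1)) (hp : ∀ j i, M j ∣ p (j + 1) i - p j i) (n : ℕ) :
    ∃ y : ℕ → ℤ, (fun i => p (i + 1) i) = p n + M n • y := by
  have hdvd (i : ℕ) : M n ∣ p (i + 1) i - p n i := by
    rcases le_total n (i + 1) with h | h
    · exact dvd_sub_of_forall_dvd_succ_sub hM hp h i
    · simp [eq_of_forall_succ_eq_of_lt hfix (Nat.lt_succ_self i) h]
  choose y hy using hdvd
  exact ⟨y, funext fun i => by simp [← hy]⟩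

end Diagonal

namespace Specker

variable (g : ℕ → (ℕ → ℤ) →+ ℤ) (k : ℕ → ℕ)

/-- `stage j = (p_j, M_j)`: the `j`-th partial sum of the vector `x` being built, and a modulus
dividing all of its later coefficients. -/
noncomputable def stage : ℕ → (ℕ → ℤ) × ℤ
  | 0 => (0, 1)
  | j + 1 =>
    let p := (stage j).1
    let M := (stage j).2
    let d := g j (Pi.single (k j) 1)
    let p' := p + (((j : ℤ) + 1 + |g j p|) * d * M) • Pi.single (k j) 1
    (p', M * (|g j p'| + j + 1))

theorem stage_snd_pos (j : ℕ) : 0 < (stage g k j).2 := by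
  induction j with
  | zero => exact one_pos
  | succ j ih => exact mul_pos ih (by positivity)

theorem lt_apply_stage_succ {j : ℕ} (hd : g j (Pi.single (k j) 1) ≠ 0) :
    (j : ℤ) < g j (stage g k (j + 1)).1 := by
  set A := g j (stage g k j).1
  set d := g j (Pi.single (k j) 1)
  have hM := stage_snd_pos g k j
  have hval :
      g j (stage g k (j + 1)).1 = A + ((j : ℤ) + 1 + |A|) * ((stage g k j).2 * (d * d)) := by
    simp only [stage, map_add, map_zsmul, smul_eq_mul, A, d]
    ring
  have hdd : 0 < d * d := mul_self_pos.mpr hd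
  have : (j : ℤ) + 1 + |A| ≤ ((j : ℤ) + 1 + |A|) * ((stage g k j).2 * (d * d)) :=
    le_mul_of_one_le_right (by positivity) (one_le_mul_of_one_le_of_one_le hM hdd)
  rw [hval]
  linarith [neg_abs_le A]

theorem exists_lt_abs_apply (hk : ∀ j, j ≤ k j) (hd : ∀ j, g j (Pi.single (k j) 1) ≠ 0) :
    ∃ x : ℕ → ℤ, ∀ j : ℕ, (j : ℤ) < |g j x| := by
  have hfix (j i : ℕ) (hij : i < j) : (stage g k (j + 1)).1 i = (stage g k j).1 i := by
    simp [stage, (hij.trans_le (hk j)).ne]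
  have hM (j : ℕ) : (stage g k j).2 ∣ (stage g k (j + 1)).2 := Dvd.intro _ rfl
  have hp (j i : ℕ) : (stage g k j).2 ∣ (stage g k (j + 1)).1 i - (stage g k j).1 i := by
    simp only [stage, Pi.add_apply, add_sub_cancel_left, Pi.smul_apply, smul_eq_mul]
    exact (dvd_mul_left _ _).mul_right _
  refine ⟨fun i => (stage g k (i + 1)).1 i, fun j => ?_⟩
  obtain ⟨y, hy⟩ := exists_diag_eq_add_smul (p := fun j => (stage g k j).1) hfix hM hp (j + 1)
  have hB := lt_apply_stage_succ g k (hd j)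
  have hMB : |g j (stage g k (j + 1)).1| + j < (stage g k (j + 1)).2 := by
    have h1 := stage_snd_pos g k j
    change _ < (stage g k j).2 * (|g j (stage g k (j + 1)).1| + j + 1)
    nlinarith [abs_nonneg (g j (stage g k (j + 1)).1)]
  rw [hy, map_add, map_zsmul, smul_eq_mul]
  exact Int.lt_abs_add_mul (hB.trans_le (le_abs_self _)) hMB _

end Specker

instance : ContinuousEvalConst ((ℕ → ℤ) →+ ℤ) (ℕ → ℤ) ℤ where
  continuous_eval_const x := (continuous_apply x).comp continuous_induced_dom

theorem IsCompact.exists_forall_ge_apply_single_eq_zero {C : Set ((ℕ → ℤ) →+ ℤ)}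
    (hC : IsCompact C) : ∃ N, ∀ g ∈ C, ∀ k ≥ N, g (Pi.single k 1) = 0 := by
  by_contra! h
  choose g hgC k hk hd using h
  obtain ⟨x, hx⟩ := Specker.exists_lt_abs_apply g k hk hd
  obtain ⟨V, hV⟩ :=
    (hC.image (continuous_abs.comp (continuous_eval_const x))).finite_of_discrete.bddAbove
  have hlarge := hx V.toNat
  have hbounded : |g V.toNat x| ≤ V := hV (mem_image_of_mem _ (hgC V.toNat))
  omega

noncomputable def evalChar (θ : AddCircle (1 : ℝ)) (x : ℕ → ℤ) :
    PontDual ((ℕ → ℤ) →+ ℤ) where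
  toFun g := g x • θ
  map_zero' := zero_zsmul θ
  map_add' g h := add_zsmul θ (g x) (h x)
  continuous_toFun :=
    (continuous_of_discreteTopology (f := fun n : ℤ => n • θ)).comp (continuous_eval_const x)

@[simp]
theorem evalChar_apply (θ : AddCircle (1 : ℝ)) (x : ℕ → ℤ) (g : (ℕ → ℤ) →+ ℤ) :
    evalChar θ x g = g x • θ := rfl

theorem tendsto_evalChar_single (θ : AddCircle (1 : ℝ)) :
    Tendsto (fun k => evalChar θ (Pi.single k 1)) atTop (𝓝 0) := by
  rw [(ContinuousAddMonoidHom.isInducing_toContinuousMap _ _).tendsto_nhds_iff,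
    ContinuousMap.tendsto_nhds_compactOpen]
  intro C hC U _ h0U
  obtain ⟨N, hN⟩ := hC.exists_forall_ge_apply_single_eq_zero
  filter_upwards [eventually_ge_atTop N] with k hk g hg
  simpa [hN g hg k hk] using h0U hg

theorem exists_finset_subset_of_mem_nhds_zero {U : Set ((ℕ → ℤ) →+ ℤ)} (hU : U ∈ 𝓝 0) :
    ∃ I : Finset (ℕ → ℤ), {g | ∀ x ∈ I, g x = 0} ⊆ U := by
  rw [nhds_induced, mem_comap] at hU
  obtain ⟨W, hW, hWU⟩ := hU
  rw [nhds_pi, mem_pi'] at hW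
  obtain ⟨I, t, ht, hIt⟩ := hW
  exact ⟨I, fun g hg => hWU (hIt fun x hx => by simpa [hg x hx] using mem_of_mem_nhds (ht x))⟩

theorem exists_forall_eq_zero_apply_single_ne_zero (I : Finset (ℕ → ℤ)) :
    ∃ g : (ℕ → ℤ) →+ ℤ, (∀ x ∈ I, g x = 0) ∧ ∃ k, g (Pi.single k 1) ≠ 0 := by
  let v : Fin (I.card + 1) → (I → ℤ) := fun n x => (x : ℕ → ℤ) n
  have hv : ¬ LinearIndependent ℤ v := fun h => by
    simpa using h.fintype_card_le_finrank
  obtain ⟨c, hc, n, hn⟩ := Fintype.not_linearIndependent_iff.mp hv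
  refine ⟨∑ m, c m • Pi.evalAddMonoidHom (fun _ => ℤ) (m : ℕ), fun x hx => ?_, n, ?_⟩
  · simpa [v] using congrFun hc ⟨x, hx⟩
  · simpa [Pi.single_apply, Fin.val_injective.eq_iff] using hn

theorem exists_finset_of_continuous_eval (θ : AddCircle (1 : ℝ)) {U : Set (AddCircle (1 : ℝ))}
    (hU : IsOpen U) (h0U : 0 ∈ U) (e : ((ℕ → ℤ) →+ ℤ) → PontDual (PontDual ((ℕ → ℤ) →+ ℤ)))
    (he : ∀ g χ, e g χ = χ g) (hcont : Continuous e) :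
    ∃ I : Finset (ℕ → ℤ), ∀ g : (ℕ → ℤ) →+ ℤ, (∀ x ∈ I, g x = 0) →
      ∀ k, g (Pi.single k 1) • θ ∈ U := by
  set K := insert 0 (range fun k => evalChar θ (Pi.single k 1))
  have hK : IsCompact K := (tendsto_evalChar_single θ).isCompact_insert_range
  have hO : {φ : PontDual (PontDual ((ℕ → ℤ) →+ ℤ)) | MapsTo φ K U} ∈ 𝓝 (e 0) :=
    ((ContinuousMap.isOpen_setOfPred_mapsTo hK hU).preimage
      (ContinuousAddMonoidHom.isInducing_toContinuousMap _ _).continuous).mem_nhds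
      fun χ _ => by simpa [he] using h0U
  obtain ⟨I, hI⟩ := exists_finset_subset_of_mem_nhds_zero (hcont.continuousAt hO)
  exact ⟨I, fun g hg k => by simpa [he] using hI hg (mem_insert_of_mem _ ⟨k, rfl⟩)⟩

/-- `G = Hom(ℤ^ℕ, ℤ)` is not reflexive: the canonical evaluation map
`α_G : G → G^^`, `g ↦ (χ ↦ χ g)`, is not a topological isomorphism; i.e.
there is no additive homeomorphism `G ≃ₜ G^^` given by evaluation. -/
theorem G_not_reflexive :
    ¬ ∃ e : ((ℕ → ℤ) →+ ℤ) ≃ₜ PontDual (PontDual ((ℕ → ℤ) →+ ℤ)),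
        ∀ (g : (ℕ → ℤ) →+ ℤ) (χ : PontDual ((ℕ → ℤ) →+ ℤ)), e g χ = χ g := by
  rintro ⟨e, he⟩
  obtain ⟨I, hI⟩ := exists_finset_of_continuous_eval (Real.sqrt 2 : AddCircle (1 : ℝ))
    Metric.isOpen_ball (Metric.mem_ball_self (by norm_num : (0 : ℝ) < 1 / 4)) e he e.continuous
  obtain ⟨g, hgI, k, hk⟩ := exists_forall_eq_zero_apply_single_ne_zero I
  have hdense :
      DenseRange fun t : ℤ => t • (g (Pi.single k 1) • (Real.sqrt 2 : AddCircle (1 : ℝ))) := by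
    rw [← AddCircle.coe_zsmul, AddCircle.denseRange_zsmul_coe_iff, div_one, zsmul_eq_mul]
    exact irrational_sqrt_two.intCast_mul hk
  obtain ⟨t, ht⟩ := hdense.exists_mem_open (isOpen_lt continuous_const continuous_norm)
    ⟨_, (AddCircle.norm_half_period_eq (1 : ℝ)).symm ▸ (by norm_num : (1 / 4 : ℝ) < |1| / 2)⟩
  have hsmall := hI (t • g) (fun x hx => by simp [hgI x hx]) k
  rw [AddMonoidHom.smul_apply, smul_assoc] at hsmall
  exact (mem_ball_zero_iff.mp hsmall).not_gt ht
end
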